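/- Let u, v : ℝ × ℝ^d → ℝ^d be C¹ vector fields with forward flow Φ^u_{0→t} and backward flow Φ^v_{t→0}, and define the hybrid flow f(t) = Φ^v_{t→0}(Φ^u_{0→t}(x₀)). Then f is differentiable and f'(t) = D_x Φ^v_{t→0}(x_t) · (u(t, x_t) − v(t, x_t)), where x_t = Φ^u_{0→t}(x₀). -/

import Mathlib

/-!
Write `x τ = Φu 0 τ x₀`. Solutions of the `C¹` field `v` are unique, so
`Φv τ 0 (x τ) = Φv t 0 (Φv τ t (x τ))` for every `τ`, and by the chain rule it suffices to
differentiate `τ ↦ Φv τ t (x τ)` at `τ = t`. The solution started at `(τ, x τ)` stays close to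
`(t, x t)` between the times `τ` and `t` (a fencing argument), so its velocity stays close to
`v t (x t)` and the mean value inequality gives
`Φv τ t (x τ) - x τ = (t - τ) • v t (x t) + o(t - τ)`. Hence `τ ↦ Φv τ t (x τ)` has derivative
`u t (x t) - v t (x t)` at `t`.
-/

open Set Function Filter Topology
open scoped Manifold

lemma contMDiff_tangentSection_of_contDiff {F : Type*} [NormedAddCommGroup F] [NormedSpace ℝ F]
    {V : F → F} (hV : ContDiff ℝ 1 V) :
    ContMDiff 𝓘(ℝ, F) 𝓘(ℝ, F).tangent 1 (fun x => (⟨x, V x⟩ : TangentBundle 𝓘(ℝ, F) F)) := by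
  have h : ContMDiff 𝓘(ℝ, F) 𝓘(ℝ, F × F) 1 (fun x => (x, V x)) :=
    (contDiff_id.prodMk hV).contMDiff
  rw [modelWithCornersSelf_prod] at h
  exact contMDiff_tangentBundleModelSpaceHomeomorph_symm.comp h

section

variable {E : Type*} [NormedAddCommGroup E] [NormedSpace ℝ E]

lemma ODE_solution_unique_of_contDiff {v : ℝ → E → E} (hv : ContDiff ℝ 1 (uncurry v))
    {γ γ' : ℝ → E} (hγ : ∀ s, HasDerivAt γ (v s (γ s)) s)
    (hγ' : ∀ s, HasDerivAt γ' (v s (γ' s)) s) {t₀ : ℝ} (h : γ t₀ = γ' t₀) : γ = γ' := by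
  have lift : ∀ {β : ℝ → E}, (∀ s, HasDerivAt β (v s (β s)) s) →
      IsMIntegralCurve (fun s => (s, β s)) (fun q : ℝ × E => ((1 : ℝ), v q.1 q.2)) := fun hβ s =>
    HasFDerivAt.hasMFDerivAt ((hasDerivAt_id s).prodMk (hβ s)).hasFDerivAt
  funext s
  exact congrArg Prod.snd <| congrFun (isMIntegralCurve_Ioo_eq_of_contMDiff_boundaryless (t₀ := t₀)
    (contMDiff_tangentSection_of_contDiff (contDiff_const.prodMk hv)) (lift hγ) (lift hγ')
    (by simp [h])) s

variable {g G : ℝ → E} {a b K ρ : ℝ}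

/-- The bound on `G` is only available while `g` stays `ρ`-close to `g a`; the barrier
`K * (s - a)` stays below `ρ` on `[a, b]`, so `g` never gets far enough to lose it. -/
lemma norm_sub_le_mul_of_norm_deriv_lt (hK : 0 ≤ K) (hKρ : K * (b - a) ≤ ρ)
    (hg : ∀ s, HasDerivAt g (G s) s) (hG : ∀ s ∈ Icc a b, ‖g s - g a‖ ≤ ρ → ‖G s‖ < K) :
    ∀ s ∈ Icc a b, ‖g s - g a‖ ≤ K * (s - a) := by
  refine image_norm_le_of_norm_deriv_right_lt_deriv_boundary (B' := fun _ => K)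
    (fun s _ => ((hg s).sub_const (g a)).continuousAt.continuousWithinAt)
    (fun s _ => ((hg s).sub_const (g a)).hasDerivWithinAt) (by simp)
    (fun s => by simpa using ((hasDerivAt_id s).sub_const a).const_mul K) ?_
  intro s hs hbd
  refine hG s (Ico_subset_Icc_self hs) (hbd.trans_le (hKρ.trans' ?_))
  exact mul_le_mul_of_nonneg_left (by linarith [hs.2]) hK

lemma norm_sub_le_mul_abs_of_norm_deriv_lt (hK : 0 ≤ K) (hKρ : K * |b - a| ≤ ρ)
    (hg : ∀ s, HasDerivAt g (G s) s) (hG : ∀ s ∈ uIcc a b, ‖g s - g a‖ ≤ ρ → ‖G s‖ < K) :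
    ∀ s ∈ uIcc a b, ‖g s - g a‖ ≤ K * |s - a| := by
  rcases le_total a b with hab | hba
  · rw [uIcc_of_le hab] at hG ⊢
    rw [abs_of_nonneg (sub_nonneg.2 hab)] at hKρ
    intro s hs
    rw [abs_of_nonneg (sub_nonneg.2 hs.1)]
    exact norm_sub_le_mul_of_norm_deriv_lt hK hKρ hg hG s hs
  · rw [uIcc_of_ge hba] at hG ⊢
    rw [abs_of_nonpos (sub_nonpos.2 hba)] at hKρ
    intro s hs
    rw [abs_of_nonpos (sub_nonpos.2 hs.2)]
    have hg_neg : ∀ σ, HasDerivAt (fun σ => g (-σ)) (-G (-σ)) σ := fun σ => by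
      simpa [comp_def] using (hg (-σ)).scomp σ (hasDerivAt_neg σ)
    have := norm_sub_le_mul_of_norm_deriv_lt (a := -a) (b := -b) hK (by linarith) hg_neg
      (fun σ hσ hσρ => by
        simpa using hG (-σ) ⟨le_neg.1 hσ.2, neg_le.1 hσ.1⟩ (by simpa using hσρ))
      (-s) ⟨neg_le_neg hs.2, neg_le_neg hs.1⟩
    simpa [neg_add_eq_sub] using this

lemma exists_forall_norm_sub_sub_smul_le {v : ℝ → E → E} {t : ℝ} {p : E}
    (hv : ContinuousAt (uncurry v) (t, p)) {c : ℝ} (hc : 0 < c) :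
    ∃ δ > 0, ∀ (γ : ℝ → E) (τ : ℝ), (∀ s, HasDerivAt γ (v s (γ s)) s) →
      |τ - t| < δ → ‖γ τ - p‖ < δ → ‖γ t - γ τ - (t - τ) • v t p‖ ≤ c * |t - τ| := by
  obtain ⟨ε, hε, hvε⟩ := Metric.continuousAt_iff.mp hv c hc
  set K := ‖v t p‖ + c
  have hK : 0 ≤ K := by positivity
  refine ⟨ε / (2 * (K + 1)), by positivity, fun γ τ hγ hτ hγτ => ?_⟩
  have hδε : ε / (2 * (K + 1)) ≤ ε / 2 := by gcongr; linarith
  have hKρ : K * |t - τ| ≤ ε / 2 := by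
    calc K * |t - τ| ≤ K * (ε / (2 * (K + 1))) := by rw [abs_sub_comm]; gcongr
      _ ≤ ε / 2 := by
        rw [mul_div_assoc', div_le_div_iff₀ (by positivity) two_pos]; nlinarith
  have near : ∀ s ∈ uIcc τ t, ‖γ s - γ τ‖ ≤ ε / 2 → ‖v s (γ s) - v t p‖ < c := by
    intro s hs hsτ
    rw [← dist_eq_norm]
    refine hvε (x := (s, γ s)) ?_
    rw [Prod.dist_eq]
    refine max_lt ?_ ?_
    · rw [Real.dist_eq, abs_sub_comm]
      linarith [abs_sub_right_of_mem_uIcc hs, abs_sub_comm t τ]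
    · calc dist (γ s) p ≤ ‖γ s - γ τ‖ + ‖γ τ - p‖ := by
            rw [dist_eq_norm]; exact norm_sub_le_norm_sub_add_norm_sub _ _ _
        _ < ε := by linarith
  have stay := norm_sub_le_mul_abs_of_norm_deriv_lt hK hKρ hγ fun s hs hsτ => by
    linarith [norm_le_insert' (v s (γ s)) (v t p), near s hs hsτ]
  have bound : ∀ s ∈ uIcc τ t, ‖v s (γ s) - v t p‖ ≤ c := fun s hs =>
    (near s hs <| (stay s hs).trans <|
      hKρ.trans' (mul_le_mul_of_nonneg_left (abs_sub_left_of_mem_uIcc hs) hK)).le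
  have mvt := Convex.norm_image_sub_le_of_norm_hasDerivWithin_le
    (f := fun s => γ s - s • v t p)
    (fun s _ => ((hγ s).sub ((hasDerivAt_id s).smul_const (v t p))).hasDerivWithinAt)
    (by simpa using bound) (convex_uIcc τ t) left_mem_uIcc right_mem_uIcc
  rw [Real.norm_eq_abs] at mvt
  convert mvt using 2
  module

lemma hasDerivAt_apply_of_hasDerivAt_diagonal {v : ℝ → E → E} {γ : ℝ → ℝ → E} {t : ℝ} {u₀ : E}
    (hv : ContinuousAt (uncurry v) (t, γ t t)) (hγ : ∀ τ s, HasDerivAt (γ τ) (v s (γ τ s)) s)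
    (hdiag : HasDerivAt (fun τ => γ τ τ) u₀ t) :
    HasDerivAt (fun τ => γ τ t) (u₀ - v t (γ t t)) t := by
  have hw : HasDerivAt (fun τ => γ τ t - γ τ τ) (-v t (γ t t)) t := by
    rw [hasDerivAt_iff_isLittleO, Asymptotics.isLittleO_iff]
    intro c hc
    obtain ⟨δ, hδ, hest⟩ := exists_forall_norm_sub_sub_smul_le hv hc
    have hclose : ∀ᶠ τ in 𝓝 t, ‖γ τ τ - γ t t‖ < δ := by
      simpa [dist_eq_norm] using hdiag.continuousAt.eventually (Metric.ball_mem_nhds _ hδ)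
    filter_upwards [Metric.ball_mem_nhds t hδ, hclose] with τ hτ hγτ
    convert hest (γ τ) τ (hγ τ) (Real.dist_eq τ t ▸ hτ) hγτ using 2
    · module
    · rw [Real.norm_eq_abs, abs_sub_comm]
  convert hdiag.add hw using 1
  · ext τ; simp
  · abel

end

theorem hybrid_flow_deriv_general {d : ℕ}
    (u v : ℝ → EuclideanSpace ℝ (Fin d) → EuclideanSpace ℝ (Fin d))
    (hv : ContDiff ℝ 1 (Function.uncurry v))
    (Φu Φv : ℝ → ℝ → EuclideanSpace ℝ (Fin d) → EuclideanSpace ℝ (Fin d))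
    (hΦuode : ∀ t s x, HasDerivAt (fun s' => Φu t s' x) (u s (Φu t s x)) s)
    (hΦvself : ∀ t x, Φv t t x = x)
    (hΦvode : ∀ t s x, HasDerivAt (fun s' => Φv t s' x) (v s (Φv t s x)) s)
    (hΦvdiff : ∀ t s, Differentiable ℝ (Φv t s))
    (x₀ : EuclideanSpace ℝ (Fin d)) (t : ℝ) :
    HasDerivAt (fun t' => Φv t' 0 (Φu 0 t' x₀))
      (fderiv ℝ (Φv t 0) (Φu 0 t x₀)
        (u t (Φu 0 t x₀) - v t (Φu 0 t x₀))) t := by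
  set x := fun τ => Φu 0 τ x₀
  have hsplit : ∀ τ, Φv τ 0 (x τ) = Φv t 0 (Φv τ t (x τ)) := fun τ =>
    congrFun (ODE_solution_unique_of_contDiff hv (hΦvode τ · (x τ)) (hΦvode t · _)
      (hΦvself t _).symm) 0
  have hinner : HasDerivAt (fun τ => Φv τ t (x τ)) (u t (x t) - v t (x t)) t := by
    simpa only [hΦvself] using hasDerivAt_apply_of_hasDerivAt_diagonal
      (γ := fun τ s => Φv τ s (x τ)) hv.continuous.continuousAt (fun τ s => hΦvode τ s (x τ))
      (by simpa only [hΦvself] using hΦuode 0 t x₀)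
  have houter : HasFDerivAt (Φv t 0) (fderiv ℝ (Φv t 0) (x t)) (Φv t t (x t)) := by
    rw [hΦvself]
    exact (hΦvdiff t 0 (x t)).hasFDerivAt
  rw [show (fun τ => Φv τ 0 (x τ)) = Φv t 0 ∘ fun τ => Φv τ t (x τ) from funext hsplit]
  exact houter.comp_hasDerivAt t hinner

/-- Derivative of the hybrid flow `f t = Φ^v_{t→0}(Φ^u_{0→t}(x₀))`:
`f'(t) = D_x Φ^v_{t→0}(x_t) · (u(t,x_t) - v(t,x_t))` where `x_t = Φ^u_{0→t}(x₀)`. -/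
theorem hybrid_flow_deriv {d : ℕ}
    (u v : ℝ → EuclideanSpace ℝ (Fin d) → EuclideanSpace ℝ (Fin d))
    (hu : ContDiff ℝ 1 (Function.uncurry u)) (hv : ContDiff ℝ 1 (Function.uncurry v))
    (Φu Φv : ℝ → ℝ → EuclideanSpace ℝ (Fin d) → EuclideanSpace ℝ (Fin d))
    (hΦuself : ∀ t x, Φu t t x = x)
    (hΦuode : ∀ t s x, HasDerivAt (fun s' => Φu t s' x) (u s (Φu t s x)) s)
    (hΦvself : ∀ t x, Φv t t x = x)
    (hΦvode : ∀ t s x, HasDerivAt (fun s' => Φv t s' x) (v s (Φv t s x)) s)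
    (hΦvdiff : ∀ t s, Differentiable ℝ (Φv t s))
    (x₀ : EuclideanSpace ℝ (Fin d)) (t : ℝ) :
    HasDerivAt (fun t' => Φv t' 0 (Φu 0 t' x₀))
      (fderiv ℝ (Φv t 0) (Φu 0 t x₀)
        (u t (Φu 0 t x₀) - v t (Φu 0 t x₀))) t :=
  hybrid_flow_deriv_general u v hv Φu Φv hΦuode hΦvself hΦvode hΦvdiff x₀ t
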